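/- Let D be a finite set of defaults. If the formula a has a finite rank with respect to D and the pair (a,b) belongs to the rational closure of D, then (a,b) belongs to the lexicographic closure D^l of D. -/

import Mathlib

open Set

/-- A default is a pair `(a, b)` of formulas, a formula being a set of models. -/
abbrev Default (M : Type*) := Set M × Set M

variable {M : Type*}

/-- The model `m` violates the default `d = (a, b)` iff `m ∈ a \ b`. -/
def Violates (m : M) (d : Default M) : Prop := m ∈ d.1 \ d.2

/-- The formula `c` is consistent with `B̃`, the set of material counterparts of the
defaults in `B`, iff `c ∩ ⋂ B̃ ≠ ∅`. -/
def ConsistentWith (c : Set M) (B : Set (Default M)) : Prop :=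
  (c ∩ ⋂ d ∈ B, (d.1ᶜ ∪ d.2)).Nonempty

/-- `B̃, c ⊨ d` : every model of `c` together with all material counterparts of `B`
is a model of `d`. -/
def EntailsWith (B : Set (Default M)) (c d : Set M) : Prop :=
  c ∩ ⋂ e ∈ B, (e.1ᶜ ∪ e.2) ⊆ d

/-- The level of the model `m` : the number of defaults of `D` violated by `m`. -/
noncomputable def level (D : Set (Default M)) (m : M) : ℕ :=
  {d ∈ D | Violates m d}.ncard

/-- `F` is a maxbase of `D` for `c` : `F ⊆ D`, `c` is consistent with `F̃`, and no
subset of `D` of strictly larger cardinality has its material counterparts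
consistent with `c`. -/
def Maxbase (D : Set (Default M)) (c : Set M) (F : Set (Default M)) : Prop :=
  F ⊆ D ∧ ConsistentWith c F ∧
    ∀ F' : Set (Default M), F' ⊆ D → F.ncard < F'.ncard → ¬ ConsistentWith c F'

/-- `E₀ = D`, `E_{i+1} = {(a,b) ∈ E_i | a is not consistent with Ẽ_i}`. -/
def Ee (D : Set (Default M)) : ℕ → Set (Default M)
  | 0 => D
  | (i + 1) => {d ∈ Ee D i | ¬ ConsistentWith d.1 (Ee D i)}

/-- `c` has rank `i` with respect to `D` : `i` is the least natural number such that
`c` is consistent with `Ẽ_i`. -/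
def HasRank (D : Set (Default M)) (c : Set M) (i : ℕ) : Prop :=
  ConsistentWith c (Ee D i) ∧ ∀ j < i, ¬ ConsistentWith c (Ee D j)

/-- `D_i = E_i \ E_{i+1}`. -/
def Dlev (D : Set (Default M)) (i : ℕ) : Set (Default M) := Ee D i \ Ee D (i + 1)

/-- `D_∞ = ⋂_i E_i`. -/
def Dinf (D : Set (Default M)) : Set (Default M) := ⋂ i, Ee D i

/-- `k` is the order of `D` : the least `k` such that `D_i = ∅` for every finite `i ≥ k`. -/
def IsOrder (D : Set (Default M)) (k : ℕ) : Prop :=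
  (∀ i, k ≤ i → Dlev D i = ∅) ∧ ∀ k', (∀ i, k' ≤ i → Dlev D i = ∅) → k ≤ k'

/-- The `(k+1)`-tuple associated to `X ⊆ D` : `n₀ = |D_∞ ∩ X|` and
`n_i = |D_{k-i} ∩ X|` for `1 ≤ i ≤ k`. -/
noncomputable def tup (D : Set (Default M)) (k : ℕ) (X : Set (Default M)) (i : ℕ) : ℕ :=
  if i = 0 then (Dinf D ∩ X).ncard else (Dlev D (k - i) ∩ X).ncard

/-- The seriousness ordering : `X ≺ Y` iff the tuple of `X` is lexicographically
smaller than the tuple of `Y`. -/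
def Serious (D : Set (Default M)) (k : ℕ) (X Y : Set (Default M)) : Prop :=
  ∃ j ≤ k, (∀ i < j, tup D k X i = tup D k Y i) ∧ tup D k X j < tup D k Y j

/-- `V(m)` : the set of defaults of `D` violated by the model `m`. -/
def Vset (D : Set (Default M)) (m : M) : Set (Default M) := {d ∈ D | Violates m d}

/-- The lexicographic closure `D^l` : `(a,b) ∈ D^l` iff every model of `a` that is
`≺`-minimal among the models of `a` satisfies `b` (models being compared via the
seriousness ordering of the sets of defaults they violate). -/
def LexClos (D : Set (Default M)) (k : ℕ) (a b : Set M) : Prop :=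
  ∀ m ∈ a, (∀ m' ∈ a, ¬ Serious D k (Vset D m') (Vset D m)) → m ∈ b

/-- `B` is a basis for `a` : `B ⊆ D`, `a` is consistent with `B̃`, and there is no
`B' ⊆ D` whose material counterparts are consistent with `a` and with `B ≺ B'`. -/
def LexBasis (D : Set (Default M)) (k : ℕ) (a : Set M) (B : Set (Default M)) : Prop :=
  B ⊆ D ∧ ConsistentWith a B ∧
    ∀ B' : Set (Default M), B' ⊆ D → ConsistentWith a B' → ¬ Serious D k B B'

/-- The rational closure of `D` : the pairs `(a,b)` such that either `a` has no rank,
or the rank of `a` is strictly smaller than the rank of `a ∩ bᶜ` (where `no rank`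
counts as larger than every natural number). -/
def RatClos (D : Set (Default M)) (a b : Set M) : Prop :=
  (¬ ∃ i, HasRank D a i) ∨
    ∃ i, HasRank D a i ∧
      ((¬ ∃ j, HasRank D (a ∩ bᶜ) j) ∨ ∃ j, HasRank D (a ∩ bᶜ) j ∧ i < j)

/-- `ℓ(X) = l` : `l` is the least index `i ≤ k` with `tup X i ≠ 0`, and `l = k + 1`
if the tuple of `X` is all zero. -/
def EllIs (D : Set (Default M)) (k : ℕ) (X : Set (Default M)) (l : ℕ) : Prop :=
  (l ≤ k ∧ tup D k X l ≠ 0 ∧ ∀ i < l, tup D k X i = 0) ∨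
    (l = k + 1 ∧ ∀ i ≤ k, tup D k X i = 0)

/-- `X ≪ Y` iff `ℓ(X) > ℓ(Y)`. -/
def Ll (D : Set (Default M)) (k : ℕ) (X Y : Set (Default M)) : Prop :=
  ∃ lx ly, EllIs D k X lx ∧ EllIs D k Y ly ∧ ly < lx

/-!
Let `i` be the rank of `a`. Some model `m₀` of `a` satisfies `Ẽ_i`, so it violates no default
of `D_∞` or of any `D_n` with `n ≥ i`: the first `k - i + 1` entries of its tuple vanish. Since
`(a, b)` is in the rational closure, `a ∩ bᶜ` is inconsistent with `Ẽ_i`, so every model of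
`a ∩ bᶜ` violates a default of `E_i`, which makes one of those entries nonzero. Hence
`V(m₀) ≺ V(m)` for every such model `m`, and no model of `a` outside `b` is `≺`-minimal.
-/

lemma Ee_antitone (D : Set (Default M)) : Antitone (Ee D) :=
  antitone_nat_of_succ_le fun _ _ hd => hd.1

lemma Ee_subset (D : Set (Default M)) (i : ℕ) : Ee D i ⊆ D :=
  Ee_antitone D (Nat.zero_le i)

lemma Dinf_subset_Ee (D : Set (Default M)) (i : ℕ) : Dinf D ⊆ Ee D i :=
  iInter_subset _ i

variable {D : Set (Default M)}

lemma exists_mem_Dlev_of_mem_Ee {d : Default M} {i : ℕ} (hd : d ∈ Ee D i)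
    (hinf : d ∉ Dinf D) : ∃ n ≥ i, d ∈ Dlev D n := by
  by_contra! hlev
  have hge : ∀ n ≥ i, d ∈ Ee D n := by
    intro n hn
    induction n, hn using Nat.le_induction with
    | base => exact hd
    | succ n hn ih => by_contra hsucc; exact hlev n hn ⟨ih, hsucc⟩
  exact hinf <| mem_iInter.2 fun n =>
    (le_total n i).elim (fun hni => Ee_antitone D hni hd) (hge n)

lemma hasRank_of_consistentWith {c : Set M} {i : ℕ} (h : ConsistentWith c (Ee D i)) :
    ∃ j, HasRank D c j := by
  classical
  have hex : ∃ n, ConsistentWith c (Ee D n) := ⟨i, h⟩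
  exact ⟨Nat.find hex, Nat.find_spec hex, fun _ => Nat.find_min hex⟩

lemma exists_hasRank_not_consistentWith {a b : Set M} (ha : ∃ i, HasRank D a i)
    (h : RatClos D a b) : ∃ i, HasRank D a i ∧ ¬ ConsistentWith (a ∩ bᶜ) (Ee D i) := by
  rcases h with hno | ⟨i, hri, hnone | ⟨j, hrj, hij⟩⟩
  · exact absurd ha hno
  · exact ⟨i, hri, fun hc => hnone (hasRank_of_consistentWith hc)⟩
  · exact ⟨i, hri, hrj.2 i hij⟩

lemma disjoint_Vset_iff {B : Set (Default M)} (hB : B ⊆ D) {m : M} :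
    Disjoint B (Vset D m) ↔ m ∈ ⋂ d ∈ B, (d.1ᶜ ∪ d.2) := by
  simp only [disjoint_left, Vset, Violates, mem_sep_iff, mem_sdiff, mem_iInter₂, mem_union,
    mem_compl_iff]
  exact forall₂_congr fun d hd => by tauto

lemma tup_eq_zero_of_disjoint {k i j : ℕ} {X : Set (Default M)} (hj : j ≤ k - i)
    (hX : Disjoint (Ee D i) X) : tup D k X j = 0 := by
  unfold tup
  split_ifs with hj0
  · rw [(hX.mono_left (Dinf_subset_Ee D i)).inter_eq, ncard_empty]
  · have hlev : Dlev D (k - j) ⊆ Ee D i :=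
      sdiff_subset.trans (Ee_antitone D (by omega))
    rw [(hX.mono_left hlev).inter_eq, ncard_empty]

lemma exists_tup_ne_zero {k i : ℕ} (hk : ∀ n, k ≤ n → Dlev D n = ∅) {X : Set (Default M)}
    (hX : X.Finite) (h : ¬ Disjoint (Ee D i) X) : ∃ j ≤ k - i, tup D k X j ≠ 0 := by
  obtain ⟨d, hdE, hdX⟩ := not_disjoint_iff.1 h
  by_cases hinf : d ∈ Dinf D
  · refine ⟨0, Nat.zero_le _, ?_⟩
    rw [tup, if_pos rfl]
    exact ncard_ne_zero_of_mem ⟨hinf, hdX⟩ (hX.inter_of_right _)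
  · obtain ⟨n, hin, hdn⟩ := exists_mem_Dlev_of_mem_Ee hdE hinf
    have hnk : n < k := by
      by_contra! hkn
      rw [hk n hkn] at hdn
      exact hdn
    refine ⟨k - n, by omega, ?_⟩
    rw [tup, if_neg (by omega), Nat.sub_sub_self hnk.le]
    exact ncard_ne_zero_of_mem ⟨hdn, hdX⟩ (hX.inter_of_right _)

lemma serious_of_tup_eq_zero {k l : ℕ} {X Y : Set (Default M)} (hl : l ≤ k)
    (hX : ∀ j ≤ l, tup D k X j = 0) (hY : ∃ j ≤ l, tup D k Y j ≠ 0) : Serious D k X Y := by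
  classical
  refine ⟨Nat.find hY, (Nat.find_spec hY).1.trans hl, fun i hi => ?_, ?_⟩
  · have hil : i ≤ l := hi.le.trans (Nat.find_spec hY).1
    rw [hX i hil, eq_comm]
    by_contra hYi
    exact Nat.find_min hY hi ⟨hil, hYi⟩
  · rw [hX _ (Nat.find_spec hY).1]
    exact Nat.pos_of_ne_zero (Nat.find_spec hY).2

/-- If `a` has a finite rank and `(a,b)` is in the rational closure of `D`, then
`(a,b)` is in the lexicographic closure of `D`. -/
theorem lexClos_of_ratClos
    (D : Set (Default M)) (hD : D.Finite) (k : ℕ) (hk : IsOrder D k)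
    (a b : Set M) (hfin : ∃ i, HasRank D a i) (h : RatClos D a b) :
    LexClos D k a b := by
  obtain ⟨i, hri, hsep⟩ := exists_hasRank_not_consistentWith hfin h
  obtain ⟨m₀, hm₀a, hm₀⟩ := hri.1
  intro m hma hmin
  by_contra hmb
  have hm : ¬ Disjoint (Ee D i) (Vset D m) := fun hdisj =>
    hsep ⟨m, ⟨hma, hmb⟩, (disjoint_Vset_iff (Ee_subset D i)).1 hdisj⟩
  have hm₀zero : ∀ j ≤ k - i, tup D k (Vset D m₀) j = 0 := fun _ hj =>
    tup_eq_zero_of_disjoint hj ((disjoint_Vset_iff (Ee_subset D i)).2 hm₀)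
  exact hmin m₀ hm₀a <| serious_of_tup_eq_zero (Nat.sub_le k i) hm₀zero
    (exists_tup_ne_zero hk.1 (hD.subset (sep_subset D _)) hm)
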